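/- Let $M$ be a rectangular matrix over $\mathbb{Z}[\tau]$ with $r$ rows such that the integer matrix $M(0)$ represents a surjective linear map $\mathbb{Z}^m \to \mathbb{Z}^r$. Then for any $a \in \mathbb{C}^*$ such that $a^{-1}$ is not an algebraic integer, the complex matrix $M(a)$ represents a surjective linear map $\mathbb{C}^m \to \mathbb{C}^r$ (i.e., $M(a)$ has rank $r$). -/
import Mathlib


/-- If the integer matrix `M(0)` (evaluation at `τ = 0` of an `r × m` matrix over
`ℤ[τ]`) gives a surjective map `ℤ^m → ℤ^r`, then for every `a ∈ ℂ*` such that `a⁻¹`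
is not an algebraic integer the complex matrix `M(a)` gives a surjective map
`ℂ^m → ℂ^r`. -/
theorem stmt_7 (r m : ℕ) (M : Matrix (Fin r) (Fin m) (Polynomial ℤ))
    (h0 : Function.Surjective ((M.map (fun p => p.eval 0)).mulVecLin))
    (a : ℂ) (ha : a ≠ 0) (hai : ¬ IsIntegral ℤ a⁻¹) :
    Function.Surjective
      ((M.map (fun p => (p.map (Int.castRingHom ℂ)).eval a)).mulVecLin) := by
  classical
  -- obtain a right inverse N of M(0)
  choose v hv using fun i => h0 (Pi.single i 1)
  set N : Matrix (Fin m) (Fin r) ℤ := Matrix.of (fun k i => v i k) with hNdef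
  have hMN : (M.map (fun p => p.eval 0)) * N = 1 := by
    ext i j
    have h1 := congrFun (hv j) i
    simp only [Matrix.mulVecLin_apply, Matrix.mulVec, dotProduct] at h1
    simp only [Matrix.mul_apply, hNdef, Matrix.of_apply, Matrix.one_apply]
    rw [h1, Pi.single_apply]
  -- the key polynomial
  set P : Matrix (Fin r) (Fin r) (Polynomial ℤ) := M * N.map Polynomial.C with hPdef
  set g : Polynomial ℤ := P.det with hgdef
  have hg0 : g.eval 0 = 1 := by
    have : (Polynomial.evalRingHom (0 : ℤ)) g = ((P.map (Polynomial.evalRingHom 0)).det) :=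
      RingHom.map_det _ _
    have hmap : P.map (Polynomial.evalRingHom 0) = (M.map (fun p => p.eval 0)) * N := by
      rw [hPdef, Matrix.map_mul]
      congr 1
      ext i j; simp
    rw [hmap, hMN, Matrix.det_one] at this
    simpa using this
  set φ : Polynomial ℤ →+* ℂ := Polynomial.eval₂RingHom (Int.castRingHom ℂ) a with hφdef
  have hφeq : ∀ p : Polynomial ℤ, φ p = (p.map (Int.castRingHom ℂ)).eval a := by
    intro p; simp [hφdef, Polynomial.eval_map]
  by_cases hga : φ g = 0
  · -- then a⁻¹ is an algebraic integer, contradiction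
    exfalso
    apply hai
    have hgne : g ≠ 0 := by
      intro h; rw [h] at hg0; simp at hg0
    refine ⟨g.reverse, ?_, ?_⟩
    · -- monic
      have ht : g.natTrailingDegree = 0 := by
        rw [Polynomial.natTrailingDegree_eq_zero]
        right
        rw [Polynomial.coeff_zero_eq_eval_zero, hg0]
        exact one_ne_zero
      unfold Polynomial.Monic
      rw [Polynomial.reverse_leadingCoeff, Polynomial.trailingCoeff, ht,
        Polynomial.coeff_zero_eq_eval_zero, hg0]
    · -- a⁻¹ is a root
      have : Invertible a := invertibleOfNonzero ha
      have h := (Polynomial.eval₂_reverse_eq_zero_iff (Int.castRingHom ℂ) a g).mpr (by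
        simpa [hφdef, Polynomial.coe_eval₂RingHom] using hga)
      rw [invOf_eq_inv] at h
      simpa [Polynomial.aeval_def, Polynomial.eval₂_eq_eval_map] using h
  · -- M(a) is surjective
    set Ma : Matrix (Fin r) (Fin m) ℂ :=
      M.map (fun p => (p.map (Int.castRingHom ℂ)).eval a) with hMadef
    set Nc : Matrix (Fin m) (Fin r) ℂ := N.map (Int.cast) with hNcdef
    have hQ : Ma * Nc = P.map φ := by
      rw [hPdef, Matrix.map_mul]
      congr 1
      · ext i j; simp [hMadef, hφeq]
      · ext i j
        simp only [Matrix.map_apply, hNcdef, hφdef, Polynomial.coe_eval₂RingHom,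
          ← Polynomial.coe_eval₂RingHom, ← RingHom.comp_apply]
        rw [show (Polynomial.eval₂RingHom (Int.castRingHom ℂ) a).comp (Polynomial.C) =
          Int.castRingHom ℂ from RingHom.ext (fun x => Polynomial.eval₂_C _ _)]
        simp
    have hdet : (Ma * Nc).det ≠ 0 := by
      rw [hQ, ← RingHom.mapMatrix_apply, ← RingHom.map_det]
      exact hga
    have hunit : IsUnit (Ma * Nc).det := isUnit_iff_ne_zero.mpr hdet
    intro y
    refine ⟨Nc.mulVec ((Ma * Nc)⁻¹.mulVec y), ?_⟩
    rw [Matrix.mulVecLin_apply, Matrix.mulVec_mulVec, Matrix.mulVec_mulVec,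
      Matrix.mul_nonsing_inv _ hunit, Matrix.one_mulVec]
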